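/- For the one-soliton formula q(x,t) = 2i ω̃₁ (k̃₁ - k₁) e^{θ₁ - θ̃₁} / (e^{θ₁ + θ̃₁} + ω₁ ω̃₁ e^{-(θ₁ + θ̃₁)}) with θ₁ = i k₁ x + 4 i k₁³ t and θ̃₁ = -i k̃₁ x - 4 i k̃₁³ t, the choice k₁ = i, k̃₁ = -i, ω₁ = ω̃₁ = 1 yields q(x,t) = 2 sech(2x + 8t) (up to sign convention), and this function satisfies the nonlocal focusing mKdV equation q_t + 6 q(-x,-t) q q_x + q_{xxx} = 0. -/

import Mathlib

open Complex

noncomputable def oneSoliton (k₁ k'₁ ω₁ ω'₁ : ℂ) (x t : ℝ) : ℂ :=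
  let θ₁ : ℂ := I * k₁ * x + 4 * I * k₁ ^ 3 * t
  let θ'₁ : ℂ := -I * k'₁ * x - 4 * I * k'₁ ^ 3 * t
  2 * I * ω'₁ * (k'₁ - k₁) * Complex.exp (θ₁ - θ'₁) /
    (Complex.exp (θ₁ + θ'₁) + ω₁ * ω'₁ * Complex.exp (-(θ₁ + θ'₁)))

noncomputable def sech (u : ℝ) : ℝ := 2 / (Real.exp u + Real.exp (-u))

def nonlocalMKdV (q : ℝ → ℝ → ℝ) : Prop :=
  ∀ x t : ℝ,
    deriv (fun s => q x s) t
      + 6 * q (-x) (-t) * q x t * deriv (fun y => q y t) x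
      + iteratedDeriv 3 (fun y => q y t) x = 0

noncomputable def F (u : ℝ) : ℝ := 2 * (Real.cosh u)⁻¹
noncomputable def F1 (u : ℝ) : ℝ := -2 * Real.sinh u / Real.cosh u ^ 2
noncomputable def F2 (u : ℝ) : ℝ := (-2 * Real.cosh u ^ 2 + 4 * Real.sinh u ^ 2) / Real.cosh u ^ 3
noncomputable def F3 (u : ℝ) : ℝ := Real.sinh u * (10 * Real.cosh u ^ 2 - 12 * Real.sinh u ^ 2) / Real.cosh u ^ 4

lemma sech_eq (u : ℝ) : sech u = (Real.cosh u)⁻¹ := by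
  have h : Real.exp u + Real.exp (-u) ≠ 0 := by positivity
  rw [sech, Real.cosh_eq]
  field_simp

lemma hF (u : ℝ) : HasDerivAt F (F1 u) u := by
  have hc : Real.cosh u ≠ 0 := (Real.cosh_pos u).ne'
  have h := ((Real.hasDerivAt_cosh u).inv hc).const_mul (2:ℝ)
  refine h.congr_deriv ?_
  rw [F1]
  field_simp

lemma hF1 (u : ℝ) : HasDerivAt F1 (F2 u) u := by
  have hc : Real.cosh u ≠ 0 := (Real.cosh_pos u).ne'
  have hnum : HasDerivAt (fun v : ℝ => -2 * Real.sinh v) (-2 * Real.cosh u) u :=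
    (Real.hasDerivAt_sinh u).const_mul (-2)
  have hden : HasDerivAt (fun v : ℝ => Real.cosh v ^ 2) (2 * Real.cosh u * Real.sinh u) u := by
    have := (Real.hasDerivAt_cosh u).pow 2
    exact this.congr_deriv (by simp)
  have h := hnum.div hden (by positivity)
  refine h.congr_deriv ?_
  rw [F2]
  field_simp
  ring

lemma hF2 (u : ℝ) : HasDerivAt F2 (F3 u) u := by
  have hc : Real.cosh u ≠ 0 := (Real.cosh_pos u).ne'
  have hnum : HasDerivAt (fun v : ℝ => -2 * Real.cosh v ^ 2 + 4 * Real.sinh v ^ 2)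
      (-2 * (2 * Real.cosh u * Real.sinh u) + 4 * (2 * Real.sinh u * Real.cosh u)) u := by
    have h1 := ((Real.hasDerivAt_cosh u).pow 2).const_mul (-2:ℝ)
    have h2 := ((Real.hasDerivAt_sinh u).pow 2).const_mul (4:ℝ)
    have := h1.add h2
    exact this.congr_deriv (by simp)
  have hden : HasDerivAt (fun v : ℝ => Real.cosh v ^ 3) (3 * Real.cosh u ^ 2 * Real.sinh u) u := by
    have := (Real.hasDerivAt_cosh u).pow 3
    exact this.congr_deriv (by simp)
  have h := hnum.div hden (by positivity)
  refine h.congr_deriv ?_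
  rw [F3]
  field_simp
  ring

lemma comp_affine {G G' : ℝ → ℝ} (h : ∀ u, HasDerivAt G (G' u) u) (a b x : ℝ) :
    HasDerivAt (fun y => G (a * y + b)) (a * G' (a * x + b)) x := by
  have h1 : HasDerivAt (fun y : ℝ => a * y + b) a x := by
    simpa using ((hasDerivAt_id x).const_mul a).add_const b
  exact ((h (a * x + b)).comp x h1).congr_deriv (mul_comm _ _)



/-- With k₁ = i, k'₁ = -i, ω₁ = ω'₁ = 1, the one-soliton formula yields
q(x,t) = 2 sech(2x + 8t) up to a sign convention (ε = ±1 in the argument),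
and this function satisfies the nonlocal focusing mKdV equation. -/
theorem stmt4 :
    ∃ ε : ℝ, (ε = 1 ∨ ε = -1) ∧
      (∀ x t : ℝ, oneSoliton I (-I) 1 1 x t = (2 * sech (2 * x + ε * (8 * t)) : ℝ)) ∧
      nonlocalMKdV (fun x t => 2 * sech (2 * x + ε * (8 * t))) := by
  refine ⟨-1, Or.inr rfl, ?_, ?_⟩
  · intro x t
    rw [oneSoliton]
    have hθd : (I * I * (x:ℂ) + 4 * I * I ^ 3 * t) - (-I * (-I) * x - 4 * I * (-I) ^ 3 * t) = 0 := by
      ring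
    have hθs : (I * I * (x:ℂ) + 4 * I * I ^ 3 * t) + (-I * (-I) * x - 4 * I * (-I) ^ 3 * t)
        = ((-(2 * x - 8 * t) : ℝ) : ℂ) := by
      push_cast
      linear_combination (2 * (x:ℂ) + 8 * t * (I ^ 2 - 1)) * Complex.I_sq
    rw [hθd, hθs, Complex.exp_zero, ← Complex.ofReal_neg, ← Complex.ofReal_exp,
      ← Complex.ofReal_exp]
    have hu : 2 * x + (-1 : ℝ) * (8 * t) = 2 * x - 8 * t := by ring
    rw [hu, neg_neg]
    have h2 : Real.exp (2 * x - 8 * t) + Real.exp (-(2 * x - 8 * t)) ≠ 0 := by positivity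
    have h1' : ((Real.exp (-(2 * x - 8 * t)) : ℝ) : ℂ) + 1 * 1 * ((Real.exp (2 * x - 8 * t) : ℝ) : ℂ) ≠ 0 := by
      rw [one_mul, one_mul, ← Complex.ofReal_add]
      exact_mod_cast fun h => h2 (by linarith [h] : Real.exp (2*x-8*t) + Real.exp (-(2*x-8*t)) = 0)
    have hnum : 2 * I * 1 * ((-I) - I) = (4 : ℂ) := by
      linear_combination (-4 : ℂ) * Complex.I_sq
    have hR : (2 * sech (2 * x - 8 * t) : ℝ) = 4 / (Real.exp (2 * x - 8 * t) + Real.exp (-(2 * x - 8 * t))) := by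
      rw [sech]; ring
    rw [hnum, hR, Complex.ofReal_div, div_eq_div_iff h1' (by exact_mod_cast h2)]
    push_cast
    ring
  · intro x t
    have key : ∀ v : ℝ, (2:ℝ) * sech v = F v := fun v => by rw [sech_eq, F]
    have hqt : (fun s : ℝ => 2 * sech (2 * x + -1 * (8 * s))) = fun s => F ((-8) * s + (2 * x)) := by
      funext s; rw [key]; congr 1; ring
    have hq : (fun y : ℝ => 2 * sech (2 * y + -1 * (8 * t))) = fun y => F (2 * y + (-1 * (8 * t))) := by
      funext y; rw [key]
    rw [hqt, hq, (comp_affine hF (-8) (2*x) t).deriv, (comp_affine hF 2 (-1*(8*t)) x).deriv]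
    have d1 : deriv (fun y => F (2 * y + (-1 * (8 * t)))) = fun y => 2 * F1 (2 * y + (-1 * (8 * t))) :=
      funext fun y => (comp_affine hF 2 (-1*(8*t)) y).deriv
    have d2 : deriv (fun y => 2 * F1 (2 * y + (-1 * (8 * t)))) = fun y => 2 * (2 * F2 (2 * y + (-1 * (8 * t)))) :=
      funext fun y => ((comp_affine hF1 2 (-1*(8*t)) y).const_mul 2).deriv
    have d3 : deriv (fun y => 2 * (2 * F2 (2 * y + (-1 * (8 * t))))) x = 2 * (2 * (2 * F3 (2 * x + (-1 * (8 * t))))) :=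
      (((comp_affine hF2 2 (-1*(8*t)) x).const_mul 2).const_mul 2).deriv
    rw [iteratedDeriv_succ, iteratedDeriv_succ, iteratedDeriv_one, d1, d2, d3]
    have harg : (-8) * t + 2 * x = 2 * x + -1 * (8 * t) := by ring
    rw [harg]
    simp only [key]
    have hFeven : F (2 * -x + -1 * (8 * -t)) = F (2 * x + -1 * (8 * t)) := by
      have : 2 * -x + -1 * (8 * -t) = -(2 * x + -1 * (8 * t)) := by ring
      rw [this, F, F, Real.cosh_neg]
    rw [hFeven]
    set u := 2 * x + -1 * (8 * t) with hu
    have hc : Real.cosh u ≠ 0 := (Real.cosh_pos u).ne'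
    have hsq := Real.cosh_sq u
    simp only [F, F1, F3]
    field_simp
    linear_combination (96 * Real.sinh u) * hsq
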